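/- arXiv:1312.7653 — 2 statements merged into one kernel-verified Lean document; each statement's English description precedes it below -/
import Mathlib

section
/- Fix a finite alphabet K, genome length n, the genome space X = (Fin n → K), a subset I ⊆ Fin n, a symmetric nonnegative similarity function φ on pairs of I-substrings, κ·dt > 0, and a probability measure μ on X; let P^{(I)}_μ be the recombination transition matrix (off-diagonal entries κ·dt·φ(x_I,y_I)·μ_I(y_I) for y agreeing with x outside I, zero otherwise, diagonal entries making rows sum to 1 and assumed nonnegative). Then one recombination step does not increase the negative entropy: ∑_x (μP^{(I)}_μ)(x)·ln((μP^{(I)}_μ)(x)) ≤ ∑_x μ(x)·ln(μ(x)), with the convention 0·ln 0 = 0. -/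
/-- The substring of a genome `x : Fin n → K` on a subset `I` of positions. -/
def subword {K : Type*} {n : ℕ} (I : Finset (Fin n)) (x : Fin n → K) : ↥I → K :=
  fun i => x i.1

/-- The marginal distribution of a measure `μ` on the genome space on a subset `I`. -/
def marginal {K : Type*} [Fintype K] [DecidableEq K] {n : ℕ}
    (μ : (Fin n → K) → ℝ) (I : Finset (Fin n)) (a : ↥I → K) : ℝ :=
  ∑ x : Fin n → K, if subword I x = a then μ x else 0

/-!
The recombination chain `P` is reversible with respect to the product `ρ = μ_I ⊗ μ_{Iᶜ}` of the
marginals of `μ` (this is where the symmetry of `φ` enters), so `ρ` is stationary and, termwise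
from `log t ≤ t - 1`, the relative entropy does not increase: `D(μP ‖ ρ) ≤ D(μ ‖ ρ)`.
One step also preserves both marginals `μ_I` and `μ_{Iᶜ}`, while `log ρ` is a function of `x_I`
plus a function of `x_{Iᶜ}`; hence `∑ (μP) log ρ = ∑ μ log ρ`, and subtracting these cross terms
leaves the claim.
-/

open Finset Matrix Real

section Stochastic

variable {α : Type*} [Fintype α]

lemma mul_log_sub_log_le {a b c d : ℝ} (ha : 0 < a) (hb : 0 < b) (hc : 0 < c) (hd : 0 < d) :
    a * ((log c - log d) - (log a - log b)) ≤ b * c / d - a := by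
  calc a * ((log c - log d) - (log a - log b)) = a * log (b * c / (a * d)) := by
        rw [log_div (by positivity) (by positivity), log_mul hb.ne' hc.ne',
          log_mul ha.ne' hd.ne']
        ring
    _ ≤ a * (b * c / (a * d) - 1) := by gcongr; exact log_le_sub_one_of_pos (by positivity)
    _ = b * c / d - a := by field_simp

lemma sum_sum_mul_sub_eq_zero {ι : Type*} [Fintype ι] {w : ι → ι → ℝ}
    (hw : ∀ a b, w a b = w b a) (f : ι → ℝ) : ∑ a, ∑ b, w a b * (f b - f a) = 0 := by
  simp only [mul_sub, sum_sub_distrib]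
  rw [sub_eq_zero, sum_comm]
  simp only [hw]

lemma mul_le_vecMul_apply {P : Matrix α α ℝ} (hP : ∀ x y, 0 ≤ P x y) {μ : α → ℝ}
    (hμ : ∀ x, 0 ≤ μ x) (x y : α) : μ x * P x y ≤ (μ ᵥ* P) y :=
  single_le_sum (f := fun x => μ x * P x y) (fun x _ => mul_nonneg (hμ x) (hP x y)) (mem_univ x)

lemma sum_vecMul_eq_sum {P : Matrix α α ℝ} (hrow : ∀ x, ∑ y, P x y = 1) (μ : α → ℝ) :
    ∑ y, (μ ᵥ* P) y = ∑ x, μ x := by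
  simp only [vecMul, dotProduct]
  rw [sum_comm]
  simp only [← mul_sum, hrow, mul_one]

lemma vecMul_eq_self_of_detailed_balance {P : Matrix α α ℝ} (hrow : ∀ x, ∑ y, P x y = 1)
    {ρ : α → ℝ} (hbal : ∀ x y, ρ x * P x y = ρ y * P y x) : ρ ᵥ* P = ρ := by
  ext y
  simp only [vecMul, dotProduct, hbal _ y, ← mul_sum, hrow, mul_one]

lemma vecMul_apply_eq_zero_of_stationary {P : Matrix α α ℝ} (hP : ∀ x y, 0 ≤ P x y)
    {ρ μ : α → ℝ} (hρ : ∀ x, 0 ≤ ρ x) (hρP : ρ ᵥ* P = ρ) (hμρ : ∀ x, ρ x = 0 → μ x = 0)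
    {y : α} (hy : ρ y = 0) : (μ ᵥ* P) y = 0 := by
  have hflow : ∑ x, ρ x * P x y = 0 := (congrFun hρP y).trans hy
  rw [sum_eq_zero_iff_of_nonneg fun x _ => mul_nonneg (hρ x) (hP x y)] at hflow
  refine sum_eq_zero fun x hx => ?_
  rcases mul_eq_zero.1 (hflow x hx) with h | h
  · rw [hμρ x h, zero_mul]
  · simp [h]

lemma vecMul_dotProduct_eq_add {P R : Matrix α α ℝ} (hrow : ∀ x, ∑ y, P x y = 1)
    (hoff : ∀ x y, y ≠ x → P x y = R x y) (μ g : α → ℝ) :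
    (μ ᵥ* P) ⬝ᵥ g = μ ⬝ᵥ g + ∑ x, μ x * ∑ y, R x y * (g y - g x) := by
  have hmulVec : ∀ x, (P *ᵥ g) x = g x + ∑ y, R x y * (g y - g x) := fun x => by
    have hjump : ∑ y, P x y * (g y - g x) = ∑ y, R x y * (g y - g x) :=
      sum_congr rfl fun y _ => by
        rcases eq_or_ne y x with rfl | h
        · simp
        · rw [hoff x y h]
    rw [← hjump, mulVec, dotProduct]
    simp only [mul_sub, sum_sub_distrib, ← sum_mul, hrow]
    ring
  rw [← dotProduct_mulVec, dotProduct, dotProduct]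
  simp only [hmulVec, mul_add, sum_add_distrib]

lemma mul_mul_log_sub_log_le_of_stationary {P : Matrix α α ℝ} (hP : ∀ x y, 0 ≤ P x y)
    {ρ μ : α → ℝ} (hρ : ∀ x, 0 ≤ ρ x) (hρP : ρ ᵥ* P = ρ) (hμ : ∀ x, 0 ≤ μ x)
    (hμρ : ∀ x, ρ x = 0 → μ x = 0) (x y : α) :
    P x y * (μ x * ((log ((μ ᵥ* P) y) - log (ρ y)) - (log (μ x) - log (ρ x)))) ≤
      P x y * (ρ x * (μ ᵥ* P) y / ρ y - μ x) := by
  rcases (hμ x).eq_or_lt with hμx | hμx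
  · rw [← hμx, zero_mul, sub_zero, mul_zero]
    have hν : 0 ≤ (μ ᵥ* P) y := sum_nonneg fun x _ => mul_nonneg (hμ x) (hP x y)
    exact mul_nonneg (hP x y) (div_nonneg (mul_nonneg (hρ x) hν) (hρ y))
  rcases (hP x y).eq_or_lt with hPxy | hPxy
  · rw [← hPxy, zero_mul, zero_mul]
  have hρx : 0 < ρ x := (hρ x).lt_of_ne fun h => hμx.ne' (hμρ x h.symm)
  refine mul_le_mul_of_nonneg_left (mul_log_sub_log_le hμx hρx ?_ ?_) hPxy.le
  · exact (mul_pos hμx hPxy).trans_le (mul_le_vecMul_apply hP hμ x y)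
  · exact (mul_pos hρx hPxy).trans_le
      ((mul_le_vecMul_apply hP hρ x y).trans_eq (congrFun hρP y))

lemma sum_vecMul_mul_log_sub_log_le {P : Matrix α α ℝ} (hP : ∀ x y, 0 ≤ P x y)
    (hrow : ∀ x, ∑ y, P x y = 1) {ρ μ : α → ℝ} (hρ : ∀ x, 0 ≤ ρ x) (hρP : ρ ᵥ* P = ρ)
    (hμ : ∀ x, 0 ≤ μ x) (hμρ : ∀ x, ρ x = 0 → μ x = 0) :
    ∑ y, (μ ᵥ* P) y * (log ((μ ᵥ* P) y) - log (ρ y)) ≤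
      ∑ x, μ x * (log (μ x) - log (ρ x)) := by
  set ν := μ ᵥ* P
  have hνρ : ∀ y, ρ y = 0 → ν y = 0 := fun y =>
    vecMul_apply_eq_zero_of_stationary hP hρ hρP hμρ
  have hlhs : ∀ A B : α → ℝ, ∑ x, ∑ y, P x y * (μ x * (A y - B x)) =
      ∑ y, ν y * A y - ∑ x, μ x * B x := fun A B => by
    simp only [mul_sub, sum_sub_distrib]
    congr 1
    · rw [sum_comm]
      refine sum_congr rfl fun y _ => ?_
      rw [show ν y = ∑ x : α, μ x * P x y from rfl, sum_mul]
      exact sum_congr rfl fun x _ => by ring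
    · simp only [← sum_mul, hrow, one_mul]
  have hrhs : ∑ x, ∑ y, P x y * (ρ x * ν y / ρ y - μ x) = 0 := by
    have hmass : ∑ y, ρ y * (ν y / ρ y) = ∑ y, ν y := sum_congr rfl fun y _ => by
      rcases eq_or_ne (ρ y) 0 with h | h
      · simp [h, hνρ y h]
      · field_simp
    calc ∑ x, ∑ y, P x y * (ρ x * ν y / ρ y - μ x)
        = ∑ y, (ρ ᵥ* P) y * (ν y / ρ y) - ∑ x, μ x := by
          simp only [mul_sub, sum_sub_distrib, ← sum_mul, hrow, one_mul]
          rw [sum_comm]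
          refine congrArg (· - _) (sum_congr rfl fun y _ => ?_)
          simp only [vecMul, dotProduct, sum_mul]
          exact sum_congr rfl fun x _ => by ring
      _ = 0 := by rw [hρP, hmass, sum_vecMul_eq_sum hrow, sub_self]
  linarith [hlhs (fun y => log (ν y) - log (ρ y)) (fun x => log (μ x) - log (ρ x)),
    sum_le_sum fun x (_ : x ∈ univ) => sum_le_sum fun y (_ : y ∈ univ) =>
      mul_mul_log_sub_log_le_of_stationary hP hρ hρP hμ hμρ x y]

end Stochastic

section Genome

variable {K : Type*} {n : ℕ}

def subwordEquiv (I : Finset (Fin n)) : (Fin n → K) ≃ (↥I → K) × (↥Iᶜ → K) where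
  toFun x := (subword I x, subword Iᶜ x)
  invFun p i := if h : i ∈ I then p.1 ⟨i, h⟩ else p.2 ⟨i, mem_compl.2 h⟩
  left_inv x := by
    funext i
    by_cases h : i ∈ I <;> simp [subword, h]
  right_inv p := by
    ext i
    · simp [subword, i.2]
    · simp [subword, mem_compl.1 i.2]

variable [Fintype K] [DecidableEq K]

lemma sum_ite_subword_compl_eq (I : Finset (Fin n)) (c : ↥Iᶜ → K) (F : (↥I → K) → ℝ) :
    ∑ y : Fin n → K, (if subword Iᶜ y = c then F (subword I y) else 0) = ∑ b, F b := by
  refine (Fintype.sum_equiv (subwordEquiv I) _ (fun p => if p.2 = c then F p.1 else 0)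
    fun _ => rfl).trans ?_
  rw [Fintype.sum_prod_type, sum_comm]
  simp

lemma marginal_nonneg {μ : (Fin n → K) → ℝ} (hμ : ∀ x, 0 ≤ μ x) (I : Finset (Fin n))
    (a : ↥I → K) : 0 ≤ marginal μ I a :=
  sum_nonneg fun x _ => by split_ifs <;> simp [hμ x]

lemma le_marginal_subword {μ : (Fin n → K) → ℝ} (hμ : ∀ x, 0 ≤ μ x) (I : Finset (Fin n))
    (x : Fin n → K) : μ x ≤ marginal μ I (subword I x) := by
  unfold marginal
  simpa using single_le_sum (fun y _ => by split_ifs <;> simp [hμ y]) (mem_univ x)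
    (f := fun y => if subword I y = subword I x then μ y else 0)

lemma sum_marginal_mul (μ : (Fin n → K) → ℝ) (I : Finset (Fin n)) (F : (↥I → K) → ℝ) :
    ∑ a, marginal μ I a * F a = ∑ x, μ x * F (subword I x) := by
  simp only [marginal, sum_mul, ite_mul, zero_mul]
  rw [sum_comm]
  simp

def recombinationRate (I : Finset (Fin n)) (φ : (↥I → K) → (↥I → K) → ℝ) (κ : ℝ)
    (μ : (Fin n → K) → ℝ) (x y : Fin n → K) : ℝ :=
  if subword Iᶜ y = subword Iᶜ x then
    κ * φ (subword I x) (subword I y) * marginal μ I (subword I y)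
  else 0

def marginalProd (μ : (Fin n → K) → ℝ) (I : Finset (Fin n)) (x : Fin n → K) : ℝ :=
  marginal μ I (subword I x) * marginal μ Iᶜ (subword Iᶜ x)

variable {I : Finset (Fin n)} {φ : (↥I → K) → (↥I → K) → ℝ} {κ : ℝ} {μ : (Fin n → K) → ℝ}

lemma recombinationRate_nonneg (hφ : ∀ a b, 0 ≤ φ a b) (hκ : 0 ≤ κ) (hμ : ∀ x, 0 ≤ μ x)
    (x y : Fin n → K) : 0 ≤ recombinationRate I φ κ μ x y := by
  unfold recombinationRate
  split_ifs
  · exact mul_nonneg (mul_nonneg hκ (hφ _ _)) (marginal_nonneg hμ I _)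
  · exact le_rfl

lemma marginalProd_mul_recombinationRate_comm (hφ : ∀ a b, φ a b = φ b a) (x y : Fin n → K) :
    marginalProd μ I x * recombinationRate I φ κ μ x y =
      marginalProd μ I y * recombinationRate I φ κ μ y x := by
  unfold marginalProd recombinationRate
  by_cases h : subword Iᶜ y = subword Iᶜ x
  · rw [if_pos h, if_pos h.symm, h, hφ]
    ring
  · rw [if_neg h, if_neg (Ne.symm h)]
    ring

lemma sum_recombinationRate_mul_subword (x : Fin n → K) (G : (↥I → K) → ℝ) :
    ∑ y, recombinationRate I φ κ μ x y * G (subword I y) =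
      ∑ b, κ * φ (subword I x) b * marginal μ I b * G b := by
  simp only [recombinationRate, ite_mul, zero_mul]
  exact sum_ite_subword_compl_eq I _ fun b => κ * φ (subword I x) b * marginal μ I b * G b

lemma sum_mul_sum_recombinationRate_mul_sub (hφ : ∀ a b, φ a b = φ b a)
    (G : (↥I → K) → ℝ) (H : (↥Iᶜ → K) → ℝ) :
    ∑ x, μ x * ∑ y, recombinationRate I φ κ μ x y *
      ((G (subword I y) + H (subword Iᶜ y)) - (G (subword I x) + H (subword Iᶜ x))) = 0 := by
  have hjump : ∀ x, ∑ y, recombinationRate I φ κ μ x y *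
      ((G (subword I y) + H (subword Iᶜ y)) - (G (subword I x) + H (subword Iᶜ x))) =
      ∑ b, κ * φ (subword I x) b * marginal μ I b * (G b - G (subword I x)) := fun x => by
    rw [← sum_recombinationRate_mul_subword x fun b => G b - G (subword I x)]
    refine sum_congr rfl fun y _ => ?_
    unfold recombinationRate
    split_ifs with h
    · rw [h]; ring
    · simp
  simp only [hjump]
  rw [← sum_marginal_mul μ I fun a => ∑ b, κ * φ a b * marginal μ I b * (G b - G a)]
  simp only [mul_sum]
  refine (sum_congr rfl fun a _ => sum_congr rfl fun b _ => ?_).trans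
    (sum_sum_mul_sub_eq_zero (w := fun a b => marginal μ I a * κ * φ a b * marginal μ I b)
      (fun a b => by rw [hφ]; ring) G)
  ring

lemma marginalProd_nonneg (hμ : ∀ x, 0 ≤ μ x) (x : Fin n → K) : 0 ≤ marginalProd μ I x :=
  mul_nonneg (marginal_nonneg hμ I _) (marginal_nonneg hμ Iᶜ _)

lemma eq_zero_of_marginalProd_eq_zero (hμ : ∀ x, 0 ≤ μ x) {x : Fin n → K}
    (hx : marginalProd μ I x = 0) : μ x = 0 := by
  refine le_antisymm ?_ (hμ x)
  rcases mul_eq_zero.1 hx with h | h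
  · exact h ▸ le_marginal_subword hμ I x
  · exact h ▸ le_marginal_subword hμ Iᶜ x

lemma sum_mul_log_marginalProd {σ : (Fin n → K) → ℝ}
    (hσ : ∀ x, marginalProd μ I x = 0 → σ x = 0) :
    ∑ x, σ x * log (marginalProd μ I x) =
      σ ⬝ᵥ fun x => log (marginal μ I (subword I x)) + log (marginal μ Iᶜ (subword Iᶜ x)) := by
  refine sum_congr rfl fun x _ => ?_
  by_cases h : marginalProd μ I x = 0
  · simp [hσ x h]
  · rw [marginalProd, log_mul (left_ne_zero_of_mul h) (right_ne_zero_of_mul h)]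

lemma vecMul_dotProduct_subword_add_subword_compl {P : Matrix (Fin n → K) (Fin n → K) ℝ}
    (hrow : ∀ x, ∑ y, P x y = 1)
    (hoff : ∀ x y, y ≠ x → P x y = recombinationRate I φ κ μ x y)
    (hφ : ∀ a b, φ a b = φ b a) (G : (↥I → K) → ℝ) (H : (↥Iᶜ → K) → ℝ) :
    (μ ᵥ* P) ⬝ᵥ (fun x => G (subword I x) + H (subword Iᶜ x)) =
      μ ⬝ᵥ fun x => G (subword I x) + H (subword Iᶜ x) := by
  rw [vecMul_dotProduct_eq_add hrow hoff, sum_mul_sum_recombinationRate_mul_sub hφ, add_zero]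

end Genome

theorem recombination_entropy_decreases_general
    {K : Type*} [Fintype K] [DecidableEq K] {n : ℕ}
    (I : Finset (Fin n))
    (φ : (↥I → K) → (↥I → K) → ℝ)
    (hφ_symm : ∀ a b, φ a b = φ b a)
    (hφ_nonneg : ∀ a b, 0 ≤ φ a b)
    (κdt : ℝ) (hκdt : 0 < κdt)
    (μ : (Fin n → K) → ℝ)
    (hμ_nonneg : ∀ x, 0 ≤ μ x)
    (P : (Fin n → K) → (Fin n → K) → ℝ)
    (hP_off : ∀ x y, y ≠ x → subword Iᶜ y = subword Iᶜ x →
      P x y = κdt * φ (subword I x) (subword I y) * marginal μ I (subword I y))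
    (hP_zero : ∀ x y, y ≠ x → subword Iᶜ y ≠ subword Iᶜ x → P x y = 0)
    (hP_diag : ∀ x, P x x = 1 - ∑ y ∈ Finset.univ.erase x, P x y)
    (hP_diag_nonneg : ∀ x, 0 ≤ P x x) :
    ∑ x, (∑ y, μ y * P y x) * Real.log (∑ y, μ y * P y x) ≤
      ∑ x, μ x * Real.log (μ x) := by
  set ρ := marginalProd μ I
  have hoff : ∀ x y, y ≠ x → P x y = recombinationRate I φ κdt μ x y := fun x y hxy => by
    by_cases hc : subword Iᶜ y = subword Iᶜ x
    · rw [hP_off x y hxy hc, recombinationRate, if_pos hc]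
    · rw [hP_zero x y hxy hc, recombinationRate, if_neg hc]
  have hrow : ∀ x, ∑ y, P x y = 1 := fun x => by
    rw [← add_sum_erase _ _ (mem_univ x), hP_diag x]
    ring
  have hP : ∀ x y, 0 ≤ P x y := fun x y => by
    rcases eq_or_ne y x with rfl | hxy
    · exact hP_diag_nonneg y
    · exact hoff x y hxy ▸ recombinationRate_nonneg hφ_nonneg hκdt.le hμ_nonneg x y
  have hρP : ρ ᵥ* P = ρ := vecMul_eq_self_of_detailed_balance hrow fun x y => by
    rcases eq_or_ne y x with rfl | hxy
    · rfl
    · rw [hoff x y hxy, hoff y x hxy.symm, marginalProd_mul_recombinationRate_comm hφ_symm]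
  have hμρ : ∀ x, ρ x = 0 → μ x = 0 := fun x => eq_zero_of_marginalProd_eq_zero hμ_nonneg
  have hνρ : ∀ x, ρ x = 0 → (μ ᵥ* P) x = 0 := fun x =>
    vecMul_apply_eq_zero_of_stationary hP (marginalProd_nonneg hμ_nonneg) hρP hμρ
  have hrel := sum_vecMul_mul_log_sub_log_le hP hrow (marginalProd_nonneg hμ_nonneg) hρP
    hμ_nonneg hμρ
  have hcross : ∑ x, (μ ᵥ* P) x * log (ρ x) = ∑ x, μ x * log (ρ x) :=
    (sum_mul_log_marginalProd hνρ).trans <|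
      (vecMul_dotProduct_subword_add_subword_compl hrow hoff hφ_symm
        (fun a => log (marginal μ I a)) (fun c => log (marginal μ Iᶜ c))).trans
        (sum_mul_log_marginalProd hμρ).symm
  simp only [mul_sub, sum_sub_distrib] at hrel
  change ∑ x, (μ ᵥ* P) x * log ((μ ᵥ* P) x) ≤ _
  linarith

/-- one recombination step does not increase the negative entropy:
`∑_x (μP)(x)·ln((μP)(x)) ≤ ∑_x μ(x)·ln(μ(x))` (with `0·ln 0 = 0`). -/
theorem recombination_entropy_decreases
    {K : Type*} [Fintype K] [DecidableEq K] {n : ℕ}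
    (I : Finset (Fin n))
    (φ : (↥I → K) → (↥I → K) → ℝ)
    (hφ_symm : ∀ a b, φ a b = φ b a)
    (hφ_nonneg : ∀ a b, 0 ≤ φ a b)
    (κdt : ℝ) (hκdt : 0 < κdt)
    (μ : (Fin n → K) → ℝ)
    (hμ_nonneg : ∀ x, 0 ≤ μ x)
    (hμ_sum : ∑ x, μ x = 1)
    (P : (Fin n → K) → (Fin n → K) → ℝ)
    (hP_off : ∀ x y, y ≠ x → subword Iᶜ y = subword Iᶜ x →
      P x y = κdt * φ (subword I x) (subword I y) * marginal μ I (subword I y))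
    (hP_zero : ∀ x y, y ≠ x → subword Iᶜ y ≠ subword Iᶜ x → P x y = 0)
    (hP_diag : ∀ x, P x x = 1 - ∑ y ∈ Finset.univ.erase x, P x y)
    (hP_diag_nonneg : ∀ x, 0 ≤ P x x) :
    ∑ x, (∑ y, μ y * P y x) * Real.log (∑ y, μ y * P y x) ≤
      ∑ x, μ x * Real.log (μ x) :=
  recombination_entropy_decreases_general I φ hφ_symm hφ_nonneg κdt hκdt μ hμ_nonneg P hP_off
    hP_zero hP_diag hP_diag_nonneg
end

section
/- Fix a finite alphabet K, genome length n, X = (Fin n → K), a subset I ⊆ Fin n, a symmetric nonnegative similarity function φ on pairs of I-substrings, κ ≥ 0, and a strictly positive probability measure q on X of product form across I and its complement, i.e. q(x) = q_{Λ∖I}(x_{Λ∖I})·q_I(x_I). Let μ : ℝ → (X → ℝ) be a differentiable family of strictly positive probability measures solving the recombination-only equation dμ(x)/dt = κ·∑_{y_I} ( φ(y_I,x_I)·μ_I(x_I)·μ(x_{Λ∖I}, y_I) − φ(x_I,y_I)·μ_I(y_I)·μ(x) ). Then the relative entropy D(μ(t)|q) = ∑_x μ(t)(x)·ln(μ(t)(x)/q(x))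 has non-positive time derivative at every t. -/
/-- `(x_{Λ∖I}, a)`: the genome obtained from `x` by replacing its restriction to `I`
with `a`. -/
def substGenome {K : Type*} {n : ℕ} (I : Finset (Fin n)) (x : Fin n → K) (a : ↥I → K) :
    Fin n → K :=
  fun j => if h : j ∈ I then a ⟨j, h⟩ else x j

/-- The right-hand side of the recombination-only equation on the subset `I`. -/
def recRHS {K : Type*} [Fintype K] [DecidableEq K] {n : ℕ}
    (I : Finset (Fin n)) (φ : (↥I → K) → (↥I → K) → ℝ) (κ : ℝ)
    (μ : (Fin n → K) → ℝ) (x : Fin n → K) : ℝ :=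
  κ * ∑ a : ↥I → K,
      (φ a (subword I x) * marginal μ I (subword I x) * μ (substGenome I x a)
        - φ (subword I x) a * marginal μ I a * μ x)

/-!
Pair each recombination event `s = (x, a)`, in which `x` takes the `I`-part `a` from a partner,
with its reverse event `σ s = ((x_{Λ∖I}, a), x_I)`; `σ` is an involution. The event has rate
`R s = φ(x_I, a) μ_I(a) μ(x) = φ(s) v(s)` with `φ` invariant under `σ`, and the entropy
production becomes `κ ∑ₛ R s (c (σ s) - c s)` with `c = log (μ / q) + 1`. Since `q` is of
product form, `c (σ s) - c s` differs from `log (v (σ s) / v s)` by `u(x_I) - u(a)` with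
`u = log (μ_I / q_I)`, and the `R`-weighted sum of that difference vanishes by the symmetry
of `φ`. Finally `v log (v ∘ σ / v) ≤ v ∘ σ - v` (from `log z ≤ z - 1`), and
`∑ φ (v ∘ σ - v) = 0` because `σ` is a bijection fixing `φ`.
-/

open Finset Real

theorem sum_sum_eq_zero_of_antisymm {ι : Type*} [Fintype ι] {F : ι → ι → ℝ}
    (hF : ∀ i j, F i j = -F j i) : ∑ i, ∑ j, F i j = 0 := by
  have h : ∑ i, ∑ j, F i j = -∑ i, ∑ j, F i j :=
    calc ∑ i, ∑ j, F i j = ∑ j, ∑ i, -F j i :=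
          sum_comm.trans (sum_congr rfl fun j _ => sum_congr rfl fun i _ => hF i j)
      _ = -∑ j, ∑ i, F j i := by simp only [sum_neg_distrib]
  linarith

namespace Function.Involutive

variable {S : Type*} [Fintype S] {σ : S → S}

theorem sum_sub_comp_mul (hσ : σ.Involutive) (J f : S → ℝ) :
    ∑ s, (J (σ s) - J s) * f s = ∑ s, J s * (f (σ s) - f s) := by
  have hswap : ∑ s, J (σ s) * f s = ∑ s, J s * f (σ s) := by
    simpa only [hσ _] using hσ.bijective.sum_comp fun s => J s * f (σ s)
  simp only [sub_mul, mul_sub, sum_sub_distrib, hswap]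

theorem sum_mul_mul_log_div_nonpos (hσ : σ.Involutive) {w v : S → ℝ}
    (hw : ∀ s, 0 ≤ w s) (hwσ : ∀ s, w (σ s) = w s) (hv : ∀ s, 0 < v s) :
    ∑ s, w s * v s * log (v (σ s) / v s) ≤ 0 := by
  have hgibbs : ∀ s, v s * log (v (σ s) / v s) ≤ v (σ s) - v s := fun s =>
    calc v s * log (v (σ s) / v s) ≤ v s * (v (σ s) / v s - 1) :=
          mul_le_mul_of_nonneg_left (log_le_sub_one_of_pos (div_pos (hv _) (hv s))) (hv s).le
      _ = v (σ s) - v s := by field_simp [(hv s).ne']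
  calc ∑ s, w s * v s * log (v (σ s) / v s) ≤ ∑ s, (w (σ s) * v (σ s) - w s * v s) :=
        sum_le_sum fun s _ => by
          rw [hwσ, ← mul_sub, mul_assoc]
          exact mul_le_mul_of_nonneg_left (hgibbs s) (hw s)
    _ = 0 := by rw [sum_sub_distrib, hσ.bijective.sum_comp fun s => w s * v s, sub_self]

end Function.Involutive

theorem HasDerivAt.mul_log_div_const {f : ℝ → ℝ} {f' t c : ℝ} (hf : HasDerivAt f f' t)
    (hft : f t ≠ 0) (hc : c ≠ 0) :
    HasDerivAt (fun s => f s * Real.log (f s / c)) (f' * (Real.log (f t / c) + 1)) t := by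
  refine (hf.fun_mul ((hf.div_const c).log (div_ne_zero hft hc))).congr_deriv ?_
  field_simp

section Genome

variable {K : Type*} {n : ℕ} (I : Finset (Fin n))

@[simp]
theorem subword_substGenome (x : Fin n → K) (a : ↥I → K) :
    subword I (substGenome I x a) = a := by
  funext i
  simp [subword, substGenome, i.2]

@[simp]
theorem substGenome_substGenome_subword (x : Fin n → K) (a : ↥I → K) :
    substGenome I (substGenome I x a) (subword I x) = x := by
  funext j
  by_cases h : j ∈ I <;> simp [substGenome, subword, h]

theorem subword_compl_substGenome (x : Fin n → K) (a : ↥I → K) :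
    subword Iᶜ (substGenome I x a) = subword Iᶜ x := by
  funext j
  simp [subword, substGenome, Finset.mem_compl.mp j.2]

/-- Sends the event "`s.1` takes the `I`-part `s.2` from a partner" to its reverse. -/
def recombSwap (s : (Fin n → K) × (↥I → K)) : (Fin n → K) × (↥I → K) :=
  (substGenome I s.1 s.2, subword I s.1)

theorem recombSwap_involutive : (recombSwap (K := K) I).Involutive := fun s => by
  simp [recombSwap]

end Genome

section Marginal

variable {K : Type*} [Fintype K] [DecidableEq K] {n : ℕ} (I : Finset (Fin n))

theorem sum_mul_comp_subword (p : (Fin n → K) → ℝ) (g : (↥I → K) → ℝ) :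
    ∑ x, p x * g (subword I x) = ∑ b, marginal p I b * g b := by
  simp_rw [marginal, sum_mul, ite_mul, zero_mul]
  rw [sum_comm]
  simp

theorem marginal_pos {p : (Fin n → K) → ℝ} (hp : ∀ x, 0 < p x) (x : Fin n → K)
    (b : ↥I → K) : 0 < marginal p I b :=
  calc 0 < p (substGenome I x b) := hp _
    _ = if subword I (substGenome I x b) = b then p (substGenome I x b) else 0 := by simp
    _ ≤ marginal p I b :=
        single_le_sum (f := fun y => if subword I y = b then p y else 0)
          (fun y _ => by split_ifs <;> simp [(hp y).le]) (mem_univ _)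

variable (φ : (↥I → K) → (↥I → K) → ℝ)

/-- The rate at which `s.1` meets a partner with `I`-part `s.2` and takes that part. -/
def recombRate (p : (Fin n → K) → ℝ) (s : (Fin n → K) × (↥I → K)) : ℝ :=
  φ (subword I s.1) s.2 * (marginal p I s.2 * p s.1)

theorem recRHS_eq_sum_recombRate (κ : ℝ) (p : (Fin n → K) → ℝ) (x : Fin n → K) :
    recRHS I φ κ p x =
      κ * ∑ a, (recombRate I φ p (recombSwap I (x, a)) - recombRate I φ p (x, a)) := by
  simp only [recRHS, recombRate, recombSwap, subword_substGenome, mul_assoc]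

theorem sum_recombRate_mul_sub_eq_zero (hφ : ∀ a b, φ a b = φ b a) (p : (Fin n → K) → ℝ)
    (u : (↥I → K) → ℝ) : ∑ s, recombRate I φ p s * (u (subword I s.1) - u s.2) = 0 :=
  calc ∑ s, recombRate I φ p s * (u (subword I s.1) - u s.2)
      = ∑ x, p x * ∑ a, φ (subword I x) a * marginal p I a * (u (subword I x) - u a) := by
        simp only [Fintype.sum_prod_type, recombRate, mul_sum]
        exact sum_congr rfl fun x _ => sum_congr rfl fun a _ => by ring
    _ = ∑ b, marginal p I b * ∑ a, φ b a * marginal p I a * (u b - u a) :=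
        sum_mul_comp_subword I p fun b => ∑ a, φ b a * marginal p I a * (u b - u a)
    _ = 0 := by
        simp only [mul_sum]
        exact sum_sum_eq_zero_of_antisymm fun b a => by rw [hφ]; ring

end Marginal

theorem sum_recRHS_mul_log_div_add_one_nonpos {K : Type*} [Fintype K] [DecidableEq K] {n : ℕ}
    (I : Finset (Fin n)) {φ : (↥I → K) → (↥I → K) → ℝ} (hφ_symm : ∀ a b, φ a b = φ b a)
    (hφ_nonneg : ∀ a b, 0 ≤ φ a b) {κ : ℝ} (hκ : 0 ≤ κ) {q : (Fin n → K) → ℝ}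
    (hq_pos : ∀ x, 0 < q x)
    (hq_prod : ∀ x, q x = marginal q Iᶜ (subword Iᶜ x) * marginal q I (subword I x))
    {p : (Fin n → K) → ℝ} (hp_pos : ∀ x, 0 < p x) :
    ∑ x, recRHS I φ κ p x * (log (p x / q x) + 1) ≤ 0 := by
  have hσ := recombSwap_involutive (K := K) I
  set σ := recombSwap (K := K) I
  set R := recombRate I φ p
  set c : (Fin n → K) → ℝ := fun x => log (p x / q x) + 1
  set v : (Fin n → K) × (↥I → K) → ℝ := fun s => marginal p I s.2 * p s.1
  set u : (↥I → K) → ℝ := fun b => log (marginal p I b / marginal q I b)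
  have hv : ∀ s, 0 < v s := fun s => mul_pos (marginal_pos I hp_pos s.1 s.2) (hp_pos s.1)
  -- the product form of `q` turns its ratio along `σ` into a ratio of `I`-marginals
  have hc : ∀ s, c (σ s).1 - c s.1 = log (v (σ s) / v s) - (u (subword I s.1) - u s.2) := by
    rintro ⟨x, a⟩
    have hp0 : ∀ y, p y ≠ 0 := fun y => (hp_pos y).ne'
    have hm0 : ∀ J : Finset (Fin n), ∀ b, marginal p J b ≠ 0 :=
      fun J b => (marginal_pos J hp_pos x b).ne'
    have hmq0 : ∀ J : Finset (Fin n), ∀ b, marginal q J b ≠ 0 :=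
      fun J b => (marginal_pos J hq_pos x b).ne'
    simp only [c, v, u, σ, recombSwap]
    rw [hq_prod (substGenome I x a), hq_prod x, subword_compl_substGenome, subword_substGenome]
    simp only [log_div, log_mul, hp0, hm0, hmq0, mul_ne_zero_iff, ne_eq,
      not_false_eq_true, and_self]
    ring
  calc ∑ x, recRHS I φ κ p x * c x = κ * ∑ s, (R (σ s) - R s) * c s.1 := by
        simp only [recRHS_eq_sum_recombRate, Fintype.sum_prod_type, mul_sum, sum_mul, mul_assoc]
        rfl
    _ = κ * ∑ s, R s * (c (σ s).1 - c s.1) := by rw [hσ.sum_sub_comp_mul]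
    _ = κ * ∑ s, (R s * log (v (σ s) / v s) - R s * (u (subword I s.1) - u s.2)) := by
        simp only [hc, mul_sub]
    _ = κ * ∑ s, R s * log (v (σ s) / v s) := by
        rw [sum_sub_distrib, sum_recombRate_mul_sub_eq_zero I φ hφ_symm, sub_zero]
    _ ≤ 0 := mul_nonpos_of_nonneg_of_nonpos hκ <|
        hσ.sum_mul_mul_log_div_nonpos (fun s => hφ_nonneg _ _)
          (fun s => by simp [σ, recombSwap, hφ_symm]) hv

theorem recombination_relative_entropy_nonincreasing_general
    {K : Type*} [Fintype K] [DecidableEq K] {n : ℕ}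
    (I : Finset (Fin n))
    (φ : (↥I → K) → (↥I → K) → ℝ)
    (hφ_symm : ∀ a b, φ a b = φ b a)
    (hφ_nonneg : ∀ a b, 0 ≤ φ a b)
    (κ : ℝ) (hκ : 0 ≤ κ)
    (q : (Fin n → K) → ℝ)
    (hq_pos : ∀ x, 0 < q x)
    (hq_prod : ∀ x, q x = marginal q Iᶜ (subword Iᶜ x) * marginal q I (subword I x))
    (μ : ℝ → (Fin n → K) → ℝ)
    (hμ_pos : ∀ t x, 0 < μ t x)
    (hμ_ode : ∀ t x, HasDerivAt (fun s => μ s x) (recRHS I φ κ (μ t) x) t) :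
    ∀ t : ℝ, deriv (fun s => ∑ x, μ s x * Real.log (μ s x / q x)) t ≤ 0 := by
  intro t
  have hD : HasDerivAt (fun s => ∑ x, μ s x * Real.log (μ s x / q x))
      (∑ x, recRHS I φ κ (μ t) x * (Real.log (μ t x / q x) + 1)) t :=
    HasDerivAt.fun_sum fun x _ =>
      (hμ_ode t x).mul_log_div_const (hμ_pos t x).ne' (hq_pos x).ne'
  rw [hD.deriv]
  exact sum_recRHS_mul_log_div_add_one_nonpos I hφ_symm hφ_nonneg hκ hq_pos hq_prod (hμ_pos t)

/-- along a strictly positive differentiable solution of the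
recombination-only equation, the relative entropy with respect to any strictly positive
probability measure `q` of product form across `I` and its complement has non-positive
time derivative. -/
theorem recombination_relative_entropy_nonincreasing
    {K : Type*} [Fintype K] [DecidableEq K] {n : ℕ}
    (I : Finset (Fin n))
    (φ : (↥I → K) → (↥I → K) → ℝ)
    (hφ_symm : ∀ a b, φ a b = φ b a)
    (hφ_nonneg : ∀ a b, 0 ≤ φ a b)
    (κ : ℝ) (hκ : 0 ≤ κ)
    (q : (Fin n → K) → ℝ)
    (hq_pos : ∀ x, 0 < q x)
    (hq_sum : ∑ x, q x = 1)
    (hq_prod : ∀ x, q x = marginal q Iᶜ (subword Iᶜ x) * marginal q I (subword I x))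
    (μ : ℝ → (Fin n → K) → ℝ)
    (hμ_pos : ∀ t x, 0 < μ t x)
    (hμ_sum : ∀ t, ∑ x, μ t x = 1)
    (hμ_ode : ∀ t x, HasDerivAt (fun s => μ s x) (recRHS I φ κ (μ t) x) t) :
    ∀ t : ℝ, deriv (fun s => ∑ x, μ s x * Real.log (μ s x / q x)) t ≤ 0 :=
  recombination_relative_entropy_nonincreasing_general I φ hφ_symm hφ_nonneg κ hκ q hq_pos hq_prod μ
    hμ_pos hμ_ode
end
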